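/- (Identification of the right-preconditioned GMRES affine space with a Krylov subspace; the key computation behind Lemma 4.1.) For every n×n complex matrix A and every integer m ≥ 1, the ℂ-subspace of ℂ^n spanned by x together with the vectors M_Π† (Π A Π* M_Π†)^j (A x) for 0 ≤ j ≤ m−1 equals the Krylov subspace 𝒦_{m+1}(M_Π† A, x), i.e., the span of the vectors (M_Π† A)^i x for 0 ≤ i ≤ m. -/

import Mathlib

/-!
`M_Π†` annihilates `w` on the right and `w*` on the left, so it absorbs the projectors:
`M_Π† Π = M_Π†` and `Π* M_Π† = M_Π†`. Hence `M_Π† (Π A Π* M_Π†) = (M_Π† A) M_Π†`, which gives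
`M_Π† (Π A Π* M_Π†)^j A x = (M_Π† A)^(j+1) x`, and the two spanning families coincide.
-/

open Matrix

theorem mul_pow_mul_eq_pow_mul_of_absorbing {R : Type*} [Monoid R] {B P Q : R}
    (hBP : B * P = B) (hQB : Q * B = B) (A : R) (j : ℕ) :
    B * (P * A * Q * B) ^ j = (B * A) ^ j * B := by
  have hsemiconj : SemiconjBy B (P * A * Q * B) (B * A) := by
    calc B * (P * A * Q * B) = (B * P) * A * (Q * B) := by simp only [mul_assoc]
      _ = B * A * B := by rw [hBP, hQB]
  exact (hsemiconj.pow_right j).eq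

namespace Matrix

variable {ι K : Type*} [Fintype ι] [DecidableEq ι]

section CommRing

variable [CommRing K]

theorem mul_one_sub_smul_vecMulVec_of_mulVec_eq_zero {B : Matrix ι ι K} {w : ι → K}
    (hBw : B *ᵥ w = 0) (c : K) (y : ι → K) : B * (1 - c • vecMulVec w y) = B := by
  rw [mul_sub, mul_one, Matrix.mul_smul, mul_vecMulVec, hBw, zero_vecMulVec, smul_zero, sub_zero]

theorem one_sub_smul_vecMulVec_mul_of_vecMul_eq_zero {B : Matrix ι ι K} {y : ι → K}
    (hyB : y ᵥ* B = 0) (c : K) (v : ι → K) : (1 - c • vecMulVec v y) * B = B := by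
  rw [sub_mul, one_mul, smul_mul, vecMulVec_mul, hyB, vecMulVec_zero, smul_zero, sub_zero]

end CommRing

section Field

variable [Field K]

theorem deflation_mulVec_eq_zero {N : Matrix ι ι K} {w z : ι → K} (hc : z ⬝ᵥ N *ᵥ w ≠ 0) :
    ((1 - (z ⬝ᵥ N *ᵥ w)⁻¹ • vecMulVec (N *ᵥ w) z) * N) *ᵥ w = 0 := by
  rw [← mulVec_mulVec, sub_mulVec, one_mulVec, smul_mulVec, vecMulVec_mulVec,
    op_smul_eq_smul, smul_smul, inv_mul_cancel₀ hc, one_smul, sub_self]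

theorem vecMul_deflation_eq_zero {N : Matrix ι ι K} {w z : ι → K} (hc : z ⬝ᵥ N *ᵥ w ≠ 0) :
    z ᵥ* ((1 - (z ⬝ᵥ N *ᵥ w)⁻¹ • vecMulVec (N *ᵥ w) z) * N) = 0 := by
  rw [← vecMul_vecMul, vecMul_sub, vecMul_one, vecMul_smul, vecMul_vecMulVec, smul_smul,
    inv_mul_cancel₀ hc, one_smul, sub_self, zero_vecMul]

end Field

end Matrix

theorem preconditioned_gmres_space_eq_krylov_general
    (n : ℕ) (M : Matrix (Fin n) (Fin n) ℂ)
    (x w : Fin n → ℂ)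
    (hwMw : star w ⬝ᵥ M⁻¹ *ᵥ w ≠ 0)
    (P : Matrix (Fin n) (Fin n) ℂ)
    (hP : P = 1 - (star x ⬝ᵥ w)⁻¹ • vecMulVec w (star x))
    (MPd : Matrix (Fin n) (Fin n) ℂ)
    (hMPd : MPd = (1 - (star w ⬝ᵥ M⁻¹ *ᵥ w)⁻¹ • vecMulVec (M⁻¹ *ᵥ w) (star w)) * M⁻¹)
    (A : Matrix (Fin n) (Fin n) ℂ) (m : ℕ) :
    Submodule.span ℂ
        (insert x (Set.range fun j : Fin m =>
          (MPd * (P * A * Pᴴ * MPd) ^ (j : ℕ)) *ᵥ (A *ᵥ x))) =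
      Submodule.span ℂ
        (Set.range fun i : Fin (m + 1) => ((MPd * A) ^ (i : ℕ)) *ᵥ x) := by
  have hMPd_w : MPd *ᵥ w = 0 := hMPd ▸ deflation_mulVec_eq_zero hwMw
  have hw_MPd : star w ᵥ* MPd = 0 := hMPd ▸ vecMul_deflation_eq_zero hwMw
  have hMPd_P : MPd * P = MPd := hP ▸ mul_one_sub_smul_vecMulVec_of_mulVec_eq_zero hMPd_w _ _
  have hPH_MPd : Pᴴ * MPd = MPd := by
    rw [hP, conjTranspose_sub, conjTranspose_one, conjTranspose_smul, conjTranspose_vecMulVec]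
    exact one_sub_smul_vecMulVec_mul_of_vecMul_eq_zero hw_MPd _ _
  have hterm (j : ℕ) :
      (MPd * (P * A * Pᴴ * MPd) ^ j) *ᵥ (A *ᵥ x) = ((MPd * A) ^ (j + 1)) *ᵥ x := by
    rw [mul_pow_mul_eq_pow_mul_of_absorbing hMPd_P hPH_MPd, mulVec_mulVec, pow_succ, mul_assoc]
  rw [Fin.range_fin_succ]
  simp only [Fin.val_zero, pow_zero, one_mulVec, hterm]
  rfl

/-- with `Π = I − (w x*)/(x*w)` and
`M_Π† = (I − (M⁻¹w w*)/(w*M⁻¹w)) M⁻¹`, for every `n×n` complex matrix `A` and every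
`m ≥ 1`, the span of `x` together with the vectors `M_Π† (Π A Π* M_Π†)^j (A x)` for
`0 ≤ j ≤ m-1` equals the Krylov subspace `𝒦_{m+1}(M_Π† A, x)`, i.e. the span of the
vectors `(M_Π† A)^i x` for `0 ≤ i ≤ m`. -/
theorem preconditioned_gmres_space_eq_krylov
    (n : ℕ) (M : Matrix (Fin n) (Fin n) ℂ) (hM : IsUnit M.det)
    (x w : Fin n → ℂ)
    (hxw : star x ⬝ᵥ w ≠ 0)
    (hwMw : star w ⬝ᵥ M⁻¹ *ᵥ w ≠ 0)
    (P : Matrix (Fin n) (Fin n) ℂ)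
    (hP : P = 1 - (star x ⬝ᵥ w)⁻¹ • vecMulVec w (star x))
    (MPd : Matrix (Fin n) (Fin n) ℂ)
    (hMPd : MPd = (1 - (star w ⬝ᵥ M⁻¹ *ᵥ w)⁻¹ • vecMulVec (M⁻¹ *ᵥ w) (star w)) * M⁻¹)
    (A : Matrix (Fin n) (Fin n) ℂ) (m : ℕ) (hm : 1 ≤ m) :
    Submodule.span ℂ
        (insert x (Set.range fun j : Fin m =>
          (MPd * (P * A * Pᴴ * MPd) ^ (j : ℕ)) *ᵥ (A *ᵥ x))) =
      Submodule.span ℂ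
        (Set.range fun i : Fin (m + 1) => ((MPd * A) ^ (i : ℕ)) *ᵥ x) :=
  preconditioned_gmres_space_eq_krylov_general n M x w hwMw P hP MPd hMPd A m
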